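/- Let ε ∈ (0, π/6) and let G = (V,E) be an ε-regular graph. If θ_ex(γ) < π/6 − ε for every straight path γ of G, then for every stratum s ∈ S(G) and any two distinct orthogonal strata s₁, s₂ ∈ S^⊥(s) one has s₁ ∩ s₂ = ∅. -/

import Mathlib

open scoped Real

noncomputable section

abbrev Pt : Type := EuclideanSpace ℝ (Fin 2)

/-- The clockwise angle in `[0, 2π)` between the vectors `u` and `v`. -/
noncomputable def cwAngle (u v : Pt) : ℝ :=
  let a := Complex.arg ((⟨u 0, u 1⟩ : ℂ) * (starRingEnd ℂ) (⟨v 0, v 1⟩ : ℂ))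
  if a < 0 then a + 2 * π else a

/-- A graph with finitely many vertices in the plane and unordered pairs of distinct
vertices as edges. -/
structure BondGraph where
  V : Set Pt
  finV : V.Finite
  E : Set (Sym2 Pt)
  not_diag : ∀ e ∈ E, ¬ e.IsDiag
  mem_V : ∀ e ∈ E, ∀ x ∈ e, x ∈ V

/-- The neighborhood `N(x, E)`. -/
def nbhd (G : BondGraph) (x : Pt) : Set Pt := {y | s(x, y) ∈ G.E}

/-- The degree `#N(x, E)`. -/
noncomputable def deg (G : BondGraph) (x : Pt) : ℕ := (nbhd G x).ncard

/-- The bond energy `F_bond(G) = Σ_{x ∈ V} (4 − #N(x,E))`. -/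
noncomputable def Fbond (G : BondGraph) : ℤ := ∑ᶠ x ∈ G.V, ((4 : ℤ) - (deg G x : ℤ))

def goodAngles (ε : ℝ) : Set ℝ :=
  Set.Icc (π / 2 - ε) (π / 2 + ε) ∪ Set.Icc (π - ε) (π + ε) ∪
    Set.Icc (3 * π / 2 - ε) (3 * π / 2 + ε)

/-- `ε`-regularity of a graph. -/
def EpsRegular (ε : ℝ) (G : BondGraph) : Prop :=
  (∀ x y : Pt, s(x, y) ∈ G.E → 1 - ε ≤ dist x y) ∧
  (∀ x y z : Pt, s(x, y) ∈ G.E → s(z, y) ∈ G.E → x ≠ z →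
    cwAngle (x - y) (z - y) ∈ goodAngles ε)

/-- The `i`-th vertex of a path (with junk value `0` out of range). -/
def nth (γ : List Pt) (i : ℕ) : Pt := γ.getD i 0

/-- The interior angle `θ_{i+2} = θ_{x_{i+2}, x_{i+1}, x_i}` of a path (`0`-based). -/
noncomputable def pathAngle (γ : List Pt) (i : ℕ) : ℝ :=
  cwAngle (nth γ (i + 2) - nth γ (i + 1)) (nth γ i - nth γ (i + 1))

/-- The list of (unordered) edges of a path. -/
def pathEdges (γ : List Pt) : List (Sym2 Pt) := (γ.zip γ.tail).map (fun p => s(p.1, p.2))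

/-- A straight path of the graph `G`. -/
def IsStraightPath (ε : ℝ) (G : BondGraph) (γ : List Pt) : Prop :=
  2 ≤ γ.length ∧
  (∀ x ∈ γ, x ∈ G.V) ∧
  γ.Chain' (fun a b => s(a, b) ∈ G.E) ∧
  (∀ i : ℕ, i + 2 < γ.length → pathAngle γ i ∈ Set.Icc (π - ε) (π + ε)) ∧
  (pathEdges γ).Nodup

/-- A path is closed if its first and last points coincide. -/
def IsClosedPath (γ : List Pt) : Prop := γ.head? = γ.getLast?

/-- The angle excess `θ_ex(γ)` of a path. -/
noncomputable def thetaEx (γ : List Pt) : ℝ :=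
  ∑ i ∈ Finset.range (γ.length - 2), |pathAngle γ i - π|

/-- Two lists are identified if they agree up to reversal. -/
def revSetoid : Setoid (List Pt) where
  r a b := a = b ∨ a = b.reverse
  iseqv := by
    constructor
    · intro a; exact Or.inl rfl
    · intro a b h
      rcases h with h | h
      · exact Or.inl h.symm
      · right; rw [h, List.reverse_reverse]
    · intro a b c hab hbc
      rcases hab with h | h <;> rcases hbc with h' | h' <;>
        simp [h, h', List.reverse_reverse]

/-- An (undirected) stratum: a list of points up to reversal. -/
def Stratum : Type := Quotient revSetoid

/-- The length `l(s)` of a stratum. -/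
def Stratum.len : Stratum → ℕ :=
  Quotient.lift List.length (by rintro a b (rfl | rfl) <;> simp)

/-- The set of vertices of a stratum. -/
def Stratum.verts : Stratum → Set Pt :=
  Quotient.lift (fun l => {x : Pt | x ∈ l}) (by
    rintro a b (rfl | rfl)
    · rfl
    · ext x; simp)

/-- `γ` is a subpath of `γ'`, up to reversal. -/
def SubPathUpToRev (γ γ' : List Pt) : Prop := γ <:+: γ' ∨ γ <:+: γ'.reverse

/-- A maximal straight path (maximal with respect to inclusion). -/
def IsMaximalStraight (ε : ℝ) (G : BondGraph) (γ : List Pt) : Prop :=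
  IsStraightPath ε G γ ∧
    ∀ γ' : List Pt, IsStraightPath ε G γ' → SubPathUpToRev γ γ' →
      (γ' = γ ∨ γ' = γ.reverse)

/-- `x ∈ V₂^π`: a vertex of degree two whose bond angle lies in `[π−ε, π+ε]`. -/
def V2pi (ε : ℝ) (G : BondGraph) (x : Pt) : Prop :=
  x ∈ G.V ∧ ∃ x₁ x₂ : Pt, x₁ ≠ x₂ ∧ nbhd G x = {x₁, x₂} ∧
    cwAngle (x₁ - x) (x₂ - x) ∈ Set.Icc (π - ε) (π + ε)

/-- The set of strata `S(G)`: maximal straight paths, together with the degenerate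
one-point stratum `(x)` counted twice for `x ∈ V₀` and once for `x ∈ V₁ ∪ V₂^π`
(the `Fin 2` tag realizes the multiplicity). -/
def strataSet (ε : ℝ) (G : BondGraph) : Set (Stratum × Fin 2) :=
  {p | ∃ γ : List Pt, IsMaximalStraight ε G γ ∧ p = (Quotient.mk revSetoid γ, 0)}
  ∪ {p | ∃ x ∈ G.V, deg G x = 0 ∧
      (p = (Quotient.mk revSetoid [x], 0) ∨ p = (Quotient.mk revSetoid [x], 1))}
  ∪ {p | ∃ x ∈ G.V, (deg G x = 1 ∨ V2pi ε G x) ∧ p = (Quotient.mk revSetoid [x], 0)}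

/-- The set of orthogonal strata `S^⊥(s)`. -/
def orthStrata (ε : ℝ) (G : BondGraph) (s : Stratum × Fin 2) : Set (Stratum × Fin 2) :=
  {s' | s' ∈ strataSet ε G ∧ s' ≠ s ∧ (Stratum.verts s.1 ∩ Stratum.verts s'.1).Nonempty}

/-!
Angles are compared in `Real.Angle`, whose norm is the distance to `0` on the circle, after
identifying the plane with `ℂ`. Since every straight path has angle excess below `π / 2`, all of
its edges, and hence all of its chords, lie in a sector of half-angle `thetaEx γ` around any one
of its edges; in particular straight paths do not revisit vertices. Together with uniqueness of
straight continuation (two edges at a vertex that both continue a third one straight make an angle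
of at most `2ε`, but distinct edges make an angle of at least `π / 2 - ε`), this shows that two
maximal straight paths with two common vertices coincide, and that distinct ones cross at nearly
right angles. Hence no three strata pass through one vertex. Finally, if `s₁, s₂ ∈ S^⊥(s)` met at
`x`, then `s₁` and `s₂` leave `s` nearly perpendicularly at `p₁ ≠ p₂`: on the same side they
would arrive at `x` nearly parallel, on opposite sides the chord `p₁ p₂` of `s` would lie in the
sector spanned by the chords `p₁ x` and `p₂ x`, far from the direction of `s`. Every estimate
closes because three angle excesses plus `3ε` stay below `π / 2`.
-/

namespace Real.Angle

lemma norm_coe_le_abs (r : ℝ) : ‖(r : Angle)‖ ≤ |r| :=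
  QuotientAddGroup.norm_mk_le_norm

lemma norm_coe_eq_abs {r : ℝ} (h : |r| ≤ π) : ‖(r : Angle)‖ = |r| :=
  (AddCircle.norm_coe_eq_abs_iff (2 * π) two_pi_pos.ne').2 (by rw [abs_of_pos two_pi_pos]; linarith)

lemma norm_coe_pi_div_two : ‖((π / 2 : ℝ) : Angle)‖ = π / 2 := by
  rw [norm_coe_eq_abs] <;> rw [abs_of_pos (by positivity)]; linarith [pi_pos]

lemma norm_coe_pi : ‖(π : Angle)‖ = π := by
  rw [norm_coe_eq_abs] <;> rw [abs_of_pos pi_pos]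

lemma norm_neg_sub_coe_pi (θ : Angle) : ‖-θ - π‖ = ‖θ - π‖ := by
  rw [← norm_neg, neg_sub, sub_neg_eq_add, add_comm, ← sub_coe_pi_eq_add_coe_pi]

lemma coe_pi_div_two_add_coe_pi_div_two : ((π / 2 : ℝ) : Angle) + (π / 2 : ℝ) = π := by
  rw [← coe_add, add_halves]

end Real.Angle

def IsNearRightAngle (ε : ℝ) (θ : Real.Angle) : Prop :=
  ‖θ - (π / 2 : ℝ)‖ ≤ ε ∨ ‖θ + (π / 2 : ℝ)‖ ≤ ε

namespace IsNearRightAngle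

variable {ε : ℝ} {θ ψ : Real.Angle}

lemma le_norm (h : IsNearRightAngle ε θ) : π / 2 - ε ≤ ‖θ‖ := by
  have h₁ := norm_sub_norm_le ((π / 2 : ℝ) : Real.Angle) θ
  have h₂ := norm_sub_norm_le (-((π / 2 : ℝ) : Real.Angle)) θ
  rw [norm_sub_rev, Real.Angle.norm_coe_pi_div_two] at h₁
  rw [norm_neg, ← neg_add', norm_neg, add_comm, Real.Angle.norm_coe_pi_div_two] at h₂
  rcases h with h | h <;> linarith

lemma le_norm_sub_pi (h : IsNearRightAngle ε θ) : π / 2 - ε ≤ ‖θ - π‖ := by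
  have key : ∀ φ : Real.Angle, ‖φ‖ ≤ ε → π / 2 - ε ≤ ‖φ + (π / 2 : ℝ)‖ := fun φ hφ => by
    have := norm_sub_norm_le ((π / 2 : ℝ) : Real.Angle) (-φ)
    rw [norm_neg, Real.Angle.norm_coe_pi_div_two, sub_neg_eq_add, add_comm] at this
    linarith
  rcases h with h | h
  · have hsplit : θ - π = -(-(θ - (π / 2 : ℝ)) + (π / 2 : ℝ)) := by
      rw [← Real.Angle.coe_pi_div_two_add_coe_pi_div_two]; abel
    rw [hsplit, norm_neg]
    exact key _ (by rwa [norm_neg])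
  · rw [Real.Angle.sub_coe_pi_eq_add_coe_pi, ← Real.Angle.coe_pi_div_two_add_coe_pi_div_two,
      ← add_assoc]
    exact key _ h

lemma sub (hθ : IsNearRightAngle ε θ) (hψ : IsNearRightAngle ε ψ) :
    ‖θ - ψ‖ ≤ 2 * ε ∨ ‖θ - ψ - π‖ ≤ 2 * ε := by
  have key : ∀ a b : Real.Angle, ‖a‖ ≤ ε → ‖b‖ ≤ ε → ‖a - b‖ ≤ 2 * ε := fun a b ha hb => by
    linarith [norm_sub_le a b]
  rcases hθ with hθ | hθ <;> rcases hψ with hψ | hψ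
  · left; convert key _ _ hθ hψ using 2; abel
  · right
    convert key _ _ hθ hψ using 2
    rw [← Real.Angle.coe_pi_div_two_add_coe_pi_div_two]; abel
  · right
    convert key _ _ hθ hψ using 2
    rw [Real.Angle.sub_coe_pi_eq_add_coe_pi, ← Real.Angle.coe_pi_div_two_add_coe_pi_div_two]; abel
  · left; convert key _ _ hθ hψ using 2; abel

lemma not_add (hε : ε < π / 6) (hθ : IsNearRightAngle ε θ) (hψ : IsNearRightAngle ε ψ) :
    ¬IsNearRightAngle ε (θ + ψ) := fun h => by
  rcases h.sub hψ with h' | h' <;> rw [add_sub_cancel_right] at h'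
  · linarith [hθ.le_norm]
  · linarith [hθ.le_norm_sub_pi]

end IsNearRightAngle

/-- The oriented angle from `w` to `z`. Unlike `Orientation.oangle` it is additive without
nonvanishing hypotheses, at the price of junk values when `z` or `w` is `0`. -/
def argDiff (z w : ℂ) : Real.Angle := (z.arg : Real.Angle) - w.arg

lemma argDiff_add_argDiff (x y z : ℂ) : argDiff x y + argDiff y z = argDiff x z := by
  simp only [argDiff]; abel

lemma argDiff_self (z : ℂ) : argDiff z z = 0 := sub_self _

lemma neg_argDiff (z w : ℂ) : -argDiff z w = argDiff w z := neg_sub _ _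

lemma norm_argDiff_comm (z w : ℂ) : ‖argDiff z w‖ = ‖argDiff w z‖ := by
  rw [← neg_argDiff, norm_neg]

lemma argDiff_neg_left {z : ℂ} (hz : z ≠ 0) (w : ℂ) : argDiff (-z) w = argDiff z w + π := by
  simp only [argDiff, Complex.arg_neg_coe_angle hz]; abel

lemma argDiff_neg_right (z : ℂ) {w : ℂ} (hw : w ≠ 0) : argDiff z (-w) = argDiff z w + π := by
  rw [argDiff, argDiff, Complex.arg_neg_coe_angle hw, sub_add_eq_sub_sub,
    Real.Angle.sub_coe_pi_eq_add_coe_pi]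

lemma argDiff_neg_neg {z w : ℂ} (hz : z ≠ 0) (hw : w ≠ 0) : argDiff (-z) (-w) = argDiff z w := by
  rw [argDiff_neg_left hz, argDiff_neg_right _ hw, add_assoc, Real.Angle.coe_pi_add_coe_pi,
    add_zero]

lemma argDiff_eq_arg_mul_conj {z w : ℂ} (hz : z ≠ 0) (hw : w ≠ 0) :
    argDiff z w = (z * (starRingEnd ℂ) w).arg := by
  rw [Complex.arg_mul_coe_angle hz (by simpa using hw), Complex.arg_conj_coe_angle]
  rfl

lemma norm_argDiff_eq_abs_arg {z w : ℂ} (hz : z ≠ 0) (hw : w ≠ 0) :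
    ‖argDiff z w‖ = |(z * (starRingEnd ℂ) w).arg| := by
  rw [argDiff_eq_arg_mul_conj hz hw, Real.Angle.norm_coe_eq_abs (Complex.abs_arg_le_pi _)]

/-- Angular sectors are cut out by a linear inequality, which is what makes them convex. -/
lemma Complex.abs_arg_le_iff_cos_mul_norm_le_re (u : ℂ) {a : ℝ} (ha₀ : 0 ≤ a) (haπ : a ≤ π) :
    |u.arg| ≤ a ↔ Real.cos a * ‖u‖ ≤ u.re := by
  rcases eq_or_ne u 0 with rfl | hu
  · simp [ha₀]
  rw [← Complex.norm_mul_cos_arg, mul_comm, mul_le_mul_iff_right₀ (norm_pos_iff.2 hu),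
    ← Real.cos_abs u.arg]
  constructor
  · exact fun h => Real.cos_le_cos_of_nonneg_of_le_pi (abs_nonneg _) haπ h
  · intro h
    by_contra! hlt
    exact (Real.cos_lt_cos_of_nonneg_of_le_pi ha₀ (Complex.abs_arg_le_pi u) hlt).not_ge h

lemma add_ne_zero_and_norm_argDiff_add_le {z₁ z₂ w : ℂ} (hz₁ : z₁ ≠ 0) (hz₂ : z₂ ≠ 0)
    (hw : w ≠ 0) {a : ℝ} (ha₀ : 0 ≤ a) (ha : a < π / 2)
    (h₁ : ‖argDiff z₁ w‖ ≤ a) (h₂ : ‖argDiff z₂ w‖ ≤ a) :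
    z₁ + z₂ ≠ 0 ∧ ‖argDiff (z₁ + z₂) w‖ ≤ a := by
  have haπ : a ≤ π := by linarith [Real.pi_pos]
  have hcos : 0 < Real.cos a := Real.cos_pos_of_mem_Ioo ⟨by linarith, ha⟩
  rw [norm_argDiff_eq_abs_arg hz₁ hw, Complex.abs_arg_le_iff_cos_mul_norm_le_re _ ha₀ haπ] at h₁
  rw [norm_argDiff_eq_abs_arg hz₂ hw, Complex.abs_arg_le_iff_cos_mul_norm_le_re _ ha₀ haπ] at h₂
  have hpos : 0 < ‖z₁ * (starRingEnd ℂ) w‖ := norm_pos_iff.2 (mul_ne_zero hz₁ (by simpa using hw))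
  have hre :
      Real.cos a * ‖(z₁ + z₂) * (starRingEnd ℂ) w‖ ≤ ((z₁ + z₂) * (starRingEnd ℂ) w).re := by
    rw [add_mul, Complex.add_re]
    nlinarith [mul_le_mul_of_nonneg_left (norm_add_le (z₁ * (starRingEnd ℂ) w)
      (z₂ * (starRingEnd ℂ) w)) hcos.le, norm_nonneg (z₂ * (starRingEnd ℂ) w)]
  have hne : z₁ + z₂ ≠ 0 := by
    have hre_pos : 0 < ((z₁ + z₂) * (starRingEnd ℂ) w).re := by
      rw [add_mul, Complex.add_re]
      nlinarith [norm_nonneg (z₂ * (starRingEnd ℂ) w)]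
    rintro h
    simp [h] at hre_pos
  refine ⟨hne, ?_⟩
  rw [norm_argDiff_eq_abs_arg hne hw, Complex.abs_arg_le_iff_cos_mul_norm_le_re _ ha₀ haπ]
  exact hre

lemma IsNearRightAngle.norm_argDiff_le_or {ε : ℝ} {f e g₁ g₂ : ℂ} (he : e ≠ 0)
    (h₁ : IsNearRightAngle ε (argDiff g₁ f)) (h₂ : IsNearRightAngle ε (argDiff g₂ (-e))) :
    ‖argDiff g₂ g₁‖ ≤ 2 * ε + ‖argDiff e f‖ ∨ ‖argDiff g₂ g₁ - π‖ ≤ 2 * ε + ‖argDiff e f‖ := by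
  rcases h₂.sub h₁ with h | h <;> rw [argDiff_neg_right _ he] at h
  · right
    have hsplit : argDiff g₂ g₁ - π = (argDiff g₂ e + π - argDiff g₁ f) + argDiff e f := by
      rw [Real.Angle.sub_coe_pi_eq_add_coe_pi]; simp only [argDiff]; abel
    rw [hsplit]
    linarith [norm_add_le (argDiff g₂ e + π - argDiff g₁ f) (argDiff e f)]
  · left
    have hsplit : argDiff g₂ g₁ = (argDiff g₂ e + π - argDiff g₁ f - π) + argDiff e f := by
      simp only [argDiff]; abel
    rw [hsplit]
    linarith [norm_add_le (argDiff g₂ e + π - argDiff g₁ f - π) (argDiff e f)]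

/-- The case of `SmallAngleExcess.not_triangle` where `γ₁` and `γ₂` leave `γ` on the same side:
their last edges `-k₁`, `-k₂` into `x` would be nearly parallel, yet they make a good angle. -/
lemma false_of_same_side {ε : ℝ} {g₁ g₂ k₁ k₂ : ℂ} (hk₁ : k₁ ≠ 0) (hk₂ : k₂ ≠ 0)
    (hk₁g : ‖argDiff k₁ g₁‖ < π / 6 - ε) (hk₂g : ‖argDiff k₂ g₂‖ < π / 6 - ε)
    (hg : ‖argDiff g₂ g₁‖ ≤ π / 6 + ε) (hx : π / 2 - ε ≤ ‖argDiff (-k₁) (-k₂)‖) : False := by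
  rw [argDiff_neg_neg hk₁ hk₂, ← argDiff_add_argDiff _ g₁, ← argDiff_add_argDiff g₁ g₂,
    ← neg_argDiff g₂, ← neg_argDiff k₂] at hx
  linarith [norm_add_le (argDiff k₁ g₁) (-argDiff g₂ g₁ + -argDiff k₂ g₂),
    norm_add_le (-argDiff g₂ g₁) (-argDiff k₂ g₂), norm_neg (argDiff g₂ g₁),
    norm_neg (argDiff k₂ g₂)]

/-- The case of `SmallAngleExcess.not_triangle` where `γ₁` and `γ₂` leave `γ` on opposite sides:
the chords `w₁`, `-w₂` from `p₁` to `x` and from `x` to `p₂` lie in a sector of half-angle `π/3`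
around `g₁`, hence so does the chord `w₁ - w₂` of `γ`, which is nearly perpendicular to `g₁`. -/
lemma false_of_opposite_sides {ε : ℝ} (hε : 0 ≤ ε) {f g₁ g₂ w₁ w₂ : ℂ} (hg₁ : g₁ ≠ 0)
    (hw₁ : w₁ ≠ 0) (hw₂ : w₂ ≠ 0) (hperp : IsNearRightAngle ε (argDiff g₁ f))
    (hv : ‖argDiff (w₁ - w₂) f‖ < π / 6 - ε) (hw₁g : ‖argDiff w₁ g₁‖ < π / 6 - ε)
    (hw₂g : ‖argDiff w₂ g₂‖ < π / 6 - ε) (hg : ‖argDiff g₂ g₁ - π‖ ≤ π / 6 + ε) : False := by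
  have hsplit : argDiff (-w₂) g₁ = argDiff w₂ g₂ + (argDiff g₂ g₁ - π) := by
    rw [argDiff_neg_left hw₂, Real.Angle.sub_coe_pi_eq_add_coe_pi, ← add_assoc,
      argDiff_add_argDiff]
  have hw₂g' : ‖argDiff (-w₂) g₁‖ ≤ π / 3 := by
    rw [hsplit]; linarith [norm_add_le (argDiff w₂ g₂) (argDiff g₂ g₁ - π)]
  obtain ⟨-, hcone⟩ := add_ne_zero_and_norm_argDiff_add_le hw₁ (neg_ne_zero.2 hw₂) hg₁
    (by positivity) (by linarith [Real.pi_pos]) (by linarith [Real.pi_pos]) hw₂g'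
  rw [← sub_eq_add_neg] at hcone
  have := hperp.le_norm
  rw [← argDiff_add_argDiff _ (w₁ - w₂), ← neg_argDiff] at this
  linarith [norm_add_le (-argDiff (w₁ - w₂) g₁) (argDiff (w₁ - w₂) f),
    norm_neg (argDiff (w₁ - w₂) g₁)]

def toComplex : Pt ≃ₗᵢ[ℝ] ℂ := Complex.orthonormalBasisOneI.repr.symm

def vec (x y : Pt) : ℂ := toComplex (y - x)

lemma vec_ne_zero {x y : Pt} (h : x ≠ y) : vec x y ≠ 0 := by
  rw [vec, ne_eq, LinearIsometryEquiv.map_eq_zero_iff, sub_eq_zero]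
  exact h.symm

lemma neg_vec (x y : Pt) : -vec x y = vec y x := by
  rw [vec, vec, ← map_neg, neg_sub]

lemma vec_add_vec (x y z : Pt) : vec x y + vec y z = vec x z := by
  rw [vec, vec, vec, ← map_add, sub_add_sub_cancel']

lemma coe_cwAngle (u v : Pt) :
    (cwAngle u v : Real.Angle) = (toComplex u * (starRingEnd ℂ) (toComplex v)).arg := by
  have hu : toComplex u = ⟨u 0, u 1⟩ := by apply Complex.ext <;> simp [toComplex]
  have hv : toComplex v = ⟨v 0, v 1⟩ := by apply Complex.ext <;> simp [toComplex]
  rw [hu, hv, cwAngle]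
  split_ifs
  · rw [Real.Angle.coe_add, Real.Angle.coe_two_pi, add_zero]
  · rfl

lemma coe_cwAngle_sub_sub {x y z : Pt} (hx : x ≠ y) (hz : z ≠ y) :
    (cwAngle (x - y) (z - y) : Real.Angle) = argDiff (vec y x) (vec y z) := by
  rw [coe_cwAngle, argDiff_eq_arg_mul_conj (vec_ne_zero hx.symm) (vec_ne_zero hz.symm)]
  rfl

lemma coe_cwAngle_comm (u v : Pt) :
    (cwAngle v u : Real.Angle) = -(cwAngle u v : Real.Angle) := by
  rw [coe_cwAngle, coe_cwAngle, ← Complex.arg_conj_coe_angle, map_mul, Complex.conj_conj,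
    mul_comm]

lemma cwAngle_mem_Ico (u v : Pt) : cwAngle u v ∈ Set.Ico 0 (2 * π) := by
  obtain ⟨h₁, h₂⟩ := Complex.arg_mem_Ioc (⟨u 0, u 1⟩ * (starRingEnd ℂ) ⟨v 0, v 1⟩)
  rw [cwAngle]
  split_ifs <;> constructor <;> linarith [Real.pi_pos]

lemma abs_cwAngle_sub_pi (u v : Pt) :
    |cwAngle u v - π| = ‖(cwAngle u v : Real.Angle) - π‖ := by
  obtain ⟨h₁, h₂⟩ := cwAngle_mem_Ico u v
  rw [← Real.Angle.coe_sub, Real.Angle.norm_coe_eq_abs (abs_le.2 ⟨by linarith, by linarith⟩)]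

lemma cwAngle_mem_Icc_iff {u v : Pt} {ε : ℝ} :
    cwAngle u v ∈ Set.Icc (π - ε) (π + ε) ↔ ‖(cwAngle u v : Real.Angle) - π‖ ≤ ε := by
  rw [← abs_cwAngle_sub_pi, abs_sub_le_iff, Set.mem_Icc]
  constructor <;> rintro ⟨h₁, h₂⟩ <;> constructor <;> linarith

lemma cwAngle_comm_mem_Icc {u v : Pt} {ε : ℝ} (h : cwAngle u v ∈ Set.Icc (π - ε) (π + ε)) :
    cwAngle v u ∈ Set.Icc (π - ε) (π + ε) := by
  rw [cwAngle_mem_Icc_iff, coe_cwAngle_comm, Real.Angle.norm_neg_sub_coe_pi]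
  exact cwAngle_mem_Icc_iff.1 h

lemma abs_cwAngle_comm_sub_pi (u v : Pt) : |cwAngle v u - π| = |cwAngle u v - π| := by
  rw [abs_cwAngle_sub_pi, abs_cwAngle_sub_pi, coe_cwAngle_comm, Real.Angle.norm_neg_sub_coe_pi]

lemma cwAngle_self_notMem_Icc {ε : ℝ} (hε : ε < π) (u : Pt) :
    cwAngle u u ∉ Set.Icc (π - ε) (π + ε) := by
  rw [cwAngle_mem_Icc_iff, coe_cwAngle, Complex.mul_conj,
    Complex.arg_ofReal_of_nonneg (Complex.normSq_nonneg _), Real.Angle.coe_zero, zero_sub,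
    norm_neg, Real.Angle.norm_coe_pi]
  exact hε.not_ge

lemma isNearRightAngle_or_of_mem_goodAngles {ε θ : ℝ} (h : θ ∈ goodAngles ε) :
    IsNearRightAngle ε θ ∨ ‖(θ : Real.Angle) - π‖ ≤ ε := by
  have key : ∀ c : ℝ, θ ∈ Set.Icc (c - ε) (c + ε) → ‖(θ : Real.Angle) - (c : Real.Angle)‖ ≤ ε :=
    fun c hc => by
      rw [← Real.Angle.coe_sub]
      exact (Real.Angle.norm_coe_le_abs _).trans
        (abs_sub_le_iff.2 ⟨by linarith [hc.2], by linarith [hc.1]⟩)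
  rcases h with (h | h) | h
  · exact Or.inl (Or.inl (key _ h))
  · exact Or.inr (key _ h)
  · refine Or.inl (Or.inr ?_)
    have h3 : ((3 * π / 2 : ℝ) : Real.Angle) = -((π / 2 : ℝ) : Real.Angle) := by
      rw [← Real.Angle.coe_neg, Real.Angle.angle_eq_iff_two_pi_dvd_sub]
      exact ⟨1, by ring⟩
    simpa [h3] using key _ h

lemma le_norm_of_mem_goodAngles {ε θ : ℝ} (h : θ ∈ goodAngles ε) :
    π / 2 - ε ≤ ‖(θ : Real.Angle)‖ := by
  rcases isNearRightAngle_or_of_mem_goodAngles h with h | h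
  · exact h.le_norm
  · have := norm_sub_norm_le (π : Real.Angle) θ
    rw [norm_sub_rev, Real.Angle.norm_coe_pi] at this
    linarith [Real.pi_pos]

lemma BondGraph.ne_of_mem_E {G : BondGraph} {x y : Pt} (h : s(x, y) ∈ G.E) : x ≠ y :=
  fun hxy => G.not_diag _ h (Sym2.mk_isDiag_iff.2 hxy)

namespace EpsRegular

variable {ε : ℝ} {G : BondGraph}

lemma le_norm_argDiff (hreg : EpsRegular ε G) {x y z : Pt} (hx : s(x, y) ∈ G.E)
    (hz : s(z, y) ∈ G.E) (hxz : x ≠ z) : π / 2 - ε ≤ ‖argDiff (vec y x) (vec y z)‖ := by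
  rw [← coe_cwAngle_sub_sub (G.ne_of_mem_E hx) (G.ne_of_mem_E hz)]
  exact le_norm_of_mem_goodAngles (hreg.2 x y z hx hz hxz)

/-- Uniqueness of straight continuation: two edges at `y`, both nearly opposite to the
direction of `a`, would make an angle of at most `2ε < π/2 - ε`. -/
lemma eq_of_cwAngle_mem_Icc (hreg : EpsRegular ε G) (hε : ε < π / 6) {a c c' y : Pt}
    (hc : s(c, y) ∈ G.E) (hc' : s(c', y) ∈ G.E) (ha : a ≠ y)
    (h : cwAngle (c - y) (a - y) ∈ Set.Icc (π - ε) (π + ε))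
    (h' : cwAngle (c' - y) (a - y) ∈ Set.Icc (π - ε) (π + ε)) : c = c' := by
  by_contra hne
  rw [cwAngle_mem_Icc_iff, coe_cwAngle_sub_sub (G.ne_of_mem_E hc) ha] at h
  rw [cwAngle_mem_Icc_iff, coe_cwAngle_sub_sub (G.ne_of_mem_E hc') ha] at h'
  have hsplit : argDiff (vec y c) (vec y c') =
      (argDiff (vec y c) (vec y a) - π) - (argDiff (vec y c') (vec y a) - π) := by
    simp only [argDiff]; abel
  have := hreg.le_norm_argDiff hc hc' hne
  rw [hsplit] at this
  linarith [norm_sub_le (argDiff (vec y c) (vec y a) - π) (argDiff (vec y c') (vec y a) - π)]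

end EpsRegular

section Paths

variable {ε : ℝ} {G : BondGraph} {γ σ τ : List Pt} {i j : ℕ}

lemma nth_eq_getElem (h : i < γ.length) : nth γ i = γ[i] := List.getD_eq_getElem _ _ h

lemma nth_mem (h : i < γ.length) : nth γ i ∈ γ := by
  rw [nth_eq_getElem h]; exact List.getElem_mem h

lemma exists_nth_eq_of_mem {x : Pt} (h : x ∈ γ) : ∃ i < γ.length, nth γ i = x := by
  obtain ⟨i, hi, rfl⟩ := List.mem_iff_getElem.1 h
  exact ⟨i, hi, nth_eq_getElem hi⟩

lemma List.Nodup.nth_inj (hγ : γ.Nodup) (hi : i < γ.length) (hj : j < γ.length)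
    (h : nth γ i = nth γ j) : i = j := by
  rwa [nth_eq_getElem hi, nth_eq_getElem hj, hγ.getElem_inj_iff] at h

lemma nth_reverse (h : i < γ.length) : nth γ.reverse i = nth γ (γ.length - 1 - i) := by
  rw [nth_eq_getElem (by simpa using h), nth_eq_getElem (by omega), List.getElem_reverse]

lemma length_pathEdges (γ : List Pt) : (pathEdges γ).length = γ.length - 1 := by
  simp [pathEdges]

lemma getElem_pathEdges (h : i < (pathEdges γ).length) :
    (pathEdges γ)[i] = s(nth γ i, nth γ (i + 1)) := by
  have hi : i + 1 < γ.length := by rw [length_pathEdges] at h; omega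
  simp [pathEdges, List.getElem_zip, List.getElem_tail, nth_eq_getElem hi,
    nth_eq_getElem (show i < γ.length by omega)]

lemma mem_pathEdges {e : Sym2 Pt} :
    e ∈ pathEdges γ ↔ ∃ i, i + 1 < γ.length ∧ e = s(nth γ i, nth γ (i + 1)) := by
  have hlen := length_pathEdges γ
  rw [List.mem_iff_getElem]
  constructor
  · rintro ⟨i, hi, rfl⟩
    exact ⟨i, by omega, getElem_pathEdges _⟩
  · rintro ⟨i, hi, rfl⟩
    exact ⟨i, by omega, getElem_pathEdges _⟩

lemma pathEdges_reverse (γ : List Pt) : pathEdges γ.reverse = (pathEdges γ).reverse := by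
  refine List.ext_getElem (by simp [length_pathEdges]) fun k h₁ h₂ => ?_
  rw [length_pathEdges, List.length_reverse] at h₁
  rw [List.getElem_reverse, getElem_pathEdges, getElem_pathEdges, nth_reverse (by omega),
    nth_reverse (by omega), Sym2.eq_swap, length_pathEdges]
  congr 2 <;> omega

lemma mem_pathEdges_reverse {p a : Pt} :
    s(p, a) ∈ pathEdges γ.reverse ↔ s(a, p) ∈ pathEdges γ := by
  rw [pathEdges_reverse, List.mem_reverse, Sym2.eq_swap]

lemma exists_succ_of_mem_pathEdges {p a : Pt} (h : s(p, a) ∈ pathEdges γ) :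
    ∃ i, i + 1 < γ.length ∧ nth γ i = p ∧ nth γ (i + 1) = a ∨
      i + 1 < γ.length ∧ nth γ.reverse i = p ∧ nth γ.reverse (i + 1) = a := by
  obtain ⟨i, hi, he⟩ := mem_pathEdges.1 h
  rcases Sym2.eq_iff.1 he with ⟨rfl, rfl⟩ | ⟨rfl, rfl⟩
  · exact ⟨i, Or.inl ⟨hi, rfl, rfl⟩⟩
  · refine ⟨γ.length - 2 - i, Or.inr ⟨by omega, ?_, ?_⟩⟩ <;>
      rw [nth_reverse (by omega)] <;> congr 1 <;> omega

lemma pathAngle_reverse (h : i + 2 < γ.length) :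
    pathAngle γ.reverse i = cwAngle (nth γ (γ.length - 3 - i) - nth γ (γ.length - 3 - i + 1))
      (nth γ (γ.length - 3 - i + 2) - nth γ (γ.length - 3 - i + 1)) := by
  rw [pathAngle, nth_reverse (by omega), nth_reverse (by omega), nth_reverse (by omega)]
  congr 3 <;> omega

lemma abs_pathAngle_reverse_sub_pi (h : i + 2 < γ.length) :
    |pathAngle γ.reverse i - π| = |pathAngle γ (γ.length - 3 - i) - π| := by
  rw [pathAngle_reverse h, abs_cwAngle_comm_sub_pi, pathAngle]

lemma thetaEx_reverse (γ : List Pt) : thetaEx γ.reverse = thetaEx γ := by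
  rw [thetaEx, thetaEx, List.length_reverse, ← Finset.sum_range_reflect]
  refine Finset.sum_congr rfl fun i hi => ?_
  rw [Finset.mem_range] at hi
  rw [abs_pathAngle_reverse_sub_pi (by omega)]
  congr 3; omega

lemma mem_of_mem_pathEdges {p a : Pt} (h : s(p, a) ∈ pathEdges γ) : p ∈ γ ∧ a ∈ γ := by
  obtain ⟨i, hi, he⟩ := mem_pathEdges.1 h
  rcases Sym2.eq_iff.1 he with ⟨rfl, rfl⟩ | ⟨rfl, rfl⟩
  · exact ⟨nth_mem (by omega), nth_mem hi⟩
  · exact ⟨nth_mem hi, nth_mem (by omega)⟩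

lemma nbhd_finite (G : BondGraph) (y : Pt) : (nbhd G y).Finite :=
  G.finV.subset fun z hz => G.mem_V _ hz z (Sym2.mem_mk_right _ _)

def edgeVec (γ : List Pt) (i : ℕ) : ℂ := vec (nth γ i) (nth γ (i + 1))

namespace IsStraightPath

lemma edge_mem (hγ : IsStraightPath ε G γ) (h : i + 1 < γ.length) :
    s(nth γ i, nth γ (i + 1)) ∈ G.E := by
  have := List.isChain_iff_getElem.1 hγ.2.2.1 i h
  rwa [nth_eq_getElem (by omega), nth_eq_getElem h]

lemma mem_E_of_mem_pathEdges (hγ : IsStraightPath ε G γ) {e : Sym2 Pt}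
    (h : e ∈ pathEdges γ) : e ∈ G.E := by
  obtain ⟨i, hi, rfl⟩ := mem_pathEdges.1 h
  exact hγ.edge_mem hi

lemma edgeVec_ne_zero (hγ : IsStraightPath ε G γ) (h : i + 1 < γ.length) : edgeVec γ i ≠ 0 :=
  vec_ne_zero (G.ne_of_mem_E (hγ.edge_mem h))

lemma abs_pathAngle_sub_pi_le (hγ : IsStraightPath ε G γ) (h : i + 2 < γ.length) :
    |pathAngle γ i - π| ≤ ε :=
  abs_sub_le_iff.2 ⟨by linarith [(hγ.2.2.2.1 i h).2], by linarith [(hγ.2.2.2.1 i h).1]⟩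

lemma norm_argDiff_edgeVec_succ_le (hγ : IsStraightPath ε G γ) (h : i + 2 < γ.length) :
    ‖argDiff (edgeVec γ (i + 1)) (edgeVec γ i)‖ ≤ |pathAngle γ i - π| := by
  have h₀ := G.ne_of_mem_E (hγ.edge_mem (i := i) (by omega))
  have h₂ := G.ne_of_mem_E (hγ.edge_mem h)
  have hturn :
      ((pathAngle γ i - π : ℝ) : Real.Angle) = argDiff (edgeVec γ (i + 1)) (edgeVec γ i) := by
    have hback : vec (nth γ (i + 1)) (nth γ i) = -edgeVec γ i := (neg_vec _ _).symm
    rw [Real.Angle.coe_sub, pathAngle, coe_cwAngle_sub_sub h₂.symm h₀, hback,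
      argDiff_neg_right _ (hγ.edgeVec_ne_zero (by omega)), add_sub_cancel_right]
    rfl
  rw [← hturn]
  exact Real.Angle.norm_coe_le_abs _

lemma norm_argDiff_edgeVec_le_sum (hγ : IsStraightPath ε G γ) (hij : i ≤ j)
    (hj : j + 1 < γ.length) :
    ‖argDiff (edgeVec γ j) (edgeVec γ i)‖ ≤ ∑ m ∈ Finset.Ico i j, |pathAngle γ m - π| := by
  induction j, hij using Nat.le_induction with
  | base => simp [argDiff_self]
  | succ j hij ih =>
    rw [Finset.sum_Ico_succ_top hij, ← argDiff_add_argDiff _ (edgeVec γ j)]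
    linarith [norm_add_le (argDiff (edgeVec γ (j + 1)) (edgeVec γ j))
      (argDiff (edgeVec γ j) (edgeVec γ i)), hγ.norm_argDiff_edgeVec_succ_le (i := j) hj,
      ih (by omega)]

lemma norm_argDiff_edgeVec_le (hγ : IsStraightPath ε G γ) (hi : i + 1 < γ.length)
    (hj : j + 1 < γ.length) : ‖argDiff (edgeVec γ j) (edgeVec γ i)‖ ≤ thetaEx γ := by
  wlog hij : i ≤ j generalizing i j
  · rw [norm_argDiff_comm]; exact this hj hi (by omega)
  refine (hγ.norm_argDiff_edgeVec_le_sum hij hj).trans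
    (Finset.sum_le_sum_of_subset_of_nonneg (fun m hm => ?_) fun _ _ _ => abs_nonneg _)
  simp only [Finset.mem_Ico, Finset.mem_range] at hm ⊢
  omega

/-- A chord is a sum of edges, all lying in the sector of half-angle `thetaEx γ < π / 2` around
any fixed edge, and sectors narrower than a half-plane are closed under addition. -/
lemma chord (hγ : IsStraightPath ε G γ) (hex : thetaEx γ < π / 2) (hij : i < j)
    (hj : j < γ.length) {m : ℕ} (hm : m + 1 < γ.length) :
    vec (nth γ i) (nth γ j) ≠ 0 ∧
      ‖argDiff (vec (nth γ i) (nth γ j)) (edgeVec γ m)‖ ≤ thetaEx γ := by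
  induction j, hij using Nat.le_induction with
  | base => exact ⟨hγ.edgeVec_ne_zero hj, hγ.norm_argDiff_edgeVec_le hm hj⟩
  | succ j hij ih =>
    obtain ⟨hne, hle⟩ := ih (by omega)
    rw [← vec_add_vec _ (nth γ j)]
    exact add_ne_zero_and_norm_argDiff_add_le hne (hγ.edgeVec_ne_zero hj)
      (hγ.edgeVec_ne_zero hm) (Finset.sum_nonneg fun _ _ => abs_nonneg _) hex hle
      (hγ.norm_argDiff_edgeVec_le hm hj)

lemma nodup (hγ : IsStraightPath ε G γ) (hex : thetaEx γ < π / 2) : γ.Nodup := by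
  refine List.pairwise_iff_getElem.2 fun i j hi hj hij heq => ?_
  have := (hγ.chord hex hij hj (m := i) (by omega)).1
  rw [nth_eq_getElem hi, nth_eq_getElem hj, heq, vec, sub_self, map_zero] at this
  exact this rfl

lemma reverse (hγ : IsStraightPath ε G γ) : IsStraightPath ε G γ.reverse := by
  refine ⟨by simpa using hγ.1, fun x hx => hγ.2.1 x (List.mem_reverse.1 hx), ?_,
    fun i hi => ?_, ?_⟩
  · exact List.isChain_reverse.2 (hγ.2.2.1.imp fun a b h => by simpa only [flip, Sym2.eq_swap])
  · rw [List.length_reverse] at hi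
    have h := abs_sub_le_iff.1 ((abs_pathAngle_reverse_sub_pi hi).trans_le
      (hγ.abs_pathAngle_sub_pi_le (i := γ.length - 3 - i) (by omega)))
    exact ⟨by linarith [h.2], by linarith [h.1]⟩
  · rw [pathEdges_reverse]; exact List.nodup_reverse.2 hγ.2.2.2.2

lemma exists_mem_pathEdges (hγ : IsStraightPath ε G γ) {p : Pt} (hp : p ∈ γ) :
    ∃ a, s(p, a) ∈ pathEdges γ := by
  obtain ⟨i, hi, rfl⟩ := exists_nth_eq_of_mem hp
  rcases lt_or_ge (i + 1) γ.length with h | h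
  · exact ⟨_, mem_pathEdges.2 ⟨i, h, rfl⟩⟩
  · have hi₁ : 1 ≤ i := by linarith [hγ.1]
    refine ⟨nth γ (i - 1), mem_pathEdges.2 ⟨i - 1, by omega, ?_⟩⟩
    rw [Sym2.eq_swap, Nat.sub_add_cancel hi₁]

lemma exists_chord_bounds (hγ : IsStraightPath ε G γ) (hex : thetaEx γ < π / 2) {p q : Pt}
    (hp : p ∈ γ) (hq : q ∈ γ) (hpq : p ≠ q) :
    ∃ a b, s(p, a) ∈ pathEdges γ ∧ s(q, b) ∈ pathEdges γ ∧
      ‖argDiff (vec p q) (vec p a)‖ ≤ thetaEx γ ∧ ‖argDiff (vec b q) (vec p a)‖ ≤ thetaEx γ := by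
  obtain ⟨i, hi, rfl⟩ := exists_nth_eq_of_mem hp
  obtain ⟨j, hj, rfl⟩ := exists_nth_eq_of_mem hq
  clear hp hq
  wlog hij : i < j generalizing γ i j
  · have hr : ∀ k, k < γ.length → nth γ.reverse (γ.length - 1 - k) = nth γ k := fun k hk => by
      rw [nth_reverse (by omega)]; congr 1; omega
    obtain ⟨a, b, ha, hb, h₁, h₂⟩ := this hγ.reverse (by rwa [thetaEx_reverse])
      (γ.length - 1 - i) (by simp; omega) (γ.length - 1 - j) (by simp; omega)
      (by rwa [hr i hi, hr j hj])
      (by have := lt_of_le_of_ne (not_lt.1 hij) fun h => hpq (by rw [h]); omega)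
    rw [mem_pathEdges_reverse, Sym2.eq_swap, hr i hi] at ha
    rw [mem_pathEdges_reverse, Sym2.eq_swap, hr j hj] at hb
    rw [hr i hi, hr j hj, thetaEx_reverse] at h₁ h₂
    exact ⟨a, b, ha, hb, h₁, h₂⟩
  refine ⟨nth γ (i + 1), nth γ (j - 1), mem_pathEdges.2 ⟨i, by omega, rfl⟩,
    mem_pathEdges.2 ⟨j - 1, by omega, ?_⟩, (hγ.chord hex hij hj (m := i) (by omega)).2, ?_⟩
  · rw [Sym2.eq_swap, show j - 1 + 1 = j by omega]
  · have := hγ.norm_argDiff_edgeVec_le (i := i) (j := j - 1) (by omega) (by omega)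
    rwa [edgeVec, show j - 1 + 1 = j by omega] at this

lemma deg_ne_zero (hγ : IsStraightPath ε G γ) {y : Pt} (hy : y ∈ γ) : deg G y ≠ 0 := by
  obtain ⟨a, ha⟩ := hγ.exists_mem_pathEdges hy
  exact ((Set.ncard_pos (nbhd_finite G y)).2 ⟨a, hγ.mem_E_of_mem_pathEdges ha⟩).ne'

lemma cons (hγ : IsStraightPath ε G γ) (hnd : γ.Nodup) (hε : ε < π) {u : Pt}
    (hu : s(u, nth γ 0) ∈ G.E)
    (hang : cwAngle (nth γ 1 - nth γ 0) (u - nth γ 0) ∈ Set.Icc (π - ε) (π + ε)) :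
    IsStraightPath ε G (u :: γ) := by
  obtain ⟨a, l, rfl⟩ :=
    List.exists_cons_of_ne_nil (List.ne_nil_of_length_pos (by linarith [hγ.1]))
  obtain ⟨hlen, hV, hchain, hangle, hedges⟩ := hγ
  refine ⟨by simp, ?_, List.isChain_cons_cons.2 ⟨hu, hchain⟩, ?_, ?_⟩
  · intro x hx
    rcases List.mem_cons.1 hx with rfl | hx
    · exact G.mem_V _ hu x (Sym2.mem_mk_left _ _)
    · exact hV x hx
  · rintro (_ | i) hi
    · exact hang
    · exact hangle i (by simp at hi ⊢; omega)
  · refine List.nodup_cons.2 ⟨fun hmem => ?_, hedges⟩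
    obtain ⟨k, hk, he⟩ := mem_pathEdges.1 hmem
    rcases Sym2.eq_iff.1 he with ⟨rfl, h⟩ | ⟨rfl, h⟩
    · have := hnd.nth_inj (i := 0) (by simp) hk h
      omega
    · obtain rfl : 0 = k := hnd.nth_inj (by simp) (by omega) h
      exact cwAngle_self_notMem_Icc hε _ hang

/-- Uniqueness of straight continuation, propagated along both paths. -/
lemma nth_add_eq (hreg : EpsRegular ε G) (hε : ε < π / 6)
    (hσ : IsStraightPath ε G σ) (hτ : IsStraightPath ε G τ)
    (h₀ : nth σ i = nth τ j) (h₁ : nth σ (i + 1) = nth τ (j + 1)) {m : ℕ}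
    (hσm : i + m < σ.length) (hτm : j + m < τ.length) : nth σ (i + m) = nth τ (j + m) := by
  suffices key : ∀ m, i + m + 1 < σ.length → j + m + 1 < τ.length →
      nth σ (i + m) = nth τ (j + m) ∧ nth σ (i + m + 1) = nth τ (j + m + 1) by
    rcases m with _ | m
    · exact h₀
    · exact (key m (by omega) (by omega)).2
  intro m
  induction m with
  | zero => exact fun _ _ => ⟨h₀, h₁⟩
  | succ m ih =>
    intro hσm hτm
    obtain ⟨e₀, e₁⟩ := ih (by omega) (by omega)
    refine ⟨e₁, ?_⟩
    have hσe := hσ.edge_mem (i := i + m + 1) (by omega)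
    have hτe := hτ.edge_mem (i := j + m + 1) (by omega)
    have hσa := hσ.2.2.2.1 (i + m) (by omega)
    have hτa := hτ.2.2.2.1 (j + m) (by omega)
    rw [Sym2.eq_swap] at hσe hτe
    rw [pathAngle, ← e₀, ← e₁] at hτa
    rw [← e₁] at hτe
    exact hreg.eq_of_cwAngle_mem_Icc hε hσe hτe (G.ne_of_mem_E (hσ.edge_mem (by omega))) hσa
      hτa

end IsStraightPath

namespace IsMaximalStraight

lemma reverse (hγ : IsMaximalStraight ε G γ) : IsMaximalStraight ε G γ.reverse := by
  refine ⟨hγ.1.reverse, fun γ' hγ' hsub => ?_⟩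
  have hsub' : SubPathUpToRev γ γ' := by
    rcases hsub with h | h
    · exact Or.inr (by simpa using List.reverse_infix.2 h)
    · exact Or.inl (by simpa using List.reverse_infix.2 h)
  rcases hγ.2 γ' hγ' hsub' with rfl | rfl
  · exact Or.inr (List.reverse_reverse _).symm
  · exact Or.inl rfl

lemma not_cons (hγ : IsMaximalStraight ε G γ) (hnd : γ.Nodup) (hε : ε < π) {u : Pt}
    (hu : s(u, nth γ 0) ∈ G.E)
    (hang : cwAngle (nth γ 1 - nth γ 0) (u - nth γ 0) ∈ Set.Icc (π - ε) (π + ε)) : False := by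
  rcases hγ.2 (u :: γ) (hγ.1.cons hnd hε hu hang) (Or.inl (List.suffix_cons u γ).isInfix)
    with h | h <;> simpa using congrArg List.length h

lemma mem_of_cwAngle_mem_Icc_of_succ (hγ : IsMaximalStraight ε G γ) (hnd : γ.Nodup)
    (hreg : EpsRegular ε G) (hε : ε < π / 6) (hi : i + 1 < γ.length) {u : Pt}
    (hu : s(u, nth γ i) ∈ G.E)
    (hang : cwAngle (u - nth γ i) (nth γ (i + 1) - nth γ i) ∈ Set.Icc (π - ε) (π + ε)) :
    u ∈ γ := by
  rcases i with _ | i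
  · exact (hγ.not_cons hnd (by linarith [Real.pi_pos]) hu (cwAngle_comm_mem_Icc hang)).elim
  · have hprev : s(nth γ i, nth γ (i + 1)) ∈ G.E := hγ.1.edge_mem (by omega)
    have hstraight := cwAngle_comm_mem_Icc (hγ.1.2.2.2.1 i hi)
    rw [hreg.eq_of_cwAngle_mem_Icc hε hu (by rwa [Sym2.eq_swap] at hprev ⊢)
      (G.ne_of_mem_E (hγ.1.edge_mem hi)).symm hang hstraight]
    exact nth_mem (by omega)

/-- At an inner vertex the straight continuation is the other neighbour, by uniqueness of
straight continuation; at an end it would extend the path. -/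
lemma mem_of_cwAngle_mem_Icc (hγ : IsMaximalStraight ε G γ) (hnd : γ.Nodup)
    (hreg : EpsRegular ε G) (hε : ε < π / 6) {p a u : Pt} (hpa : s(p, a) ∈ pathEdges γ)
    (hu : s(u, p) ∈ G.E) (hang : cwAngle (u - p) (a - p) ∈ Set.Icc (π - ε) (π + ε)) :
    u ∈ γ := by
  obtain ⟨i, ⟨hi, rfl, rfl⟩ | ⟨hi, rfl, rfl⟩⟩ := exists_succ_of_mem_pathEdges hpa
  · exact hγ.mem_of_cwAngle_mem_Icc_of_succ hnd hreg hε hi hu hang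
  · exact List.mem_reverse.1 <| hγ.reverse.mem_of_cwAngle_mem_Icc_of_succ
      (List.nodup_reverse.2 hnd) hreg hε (by simpa using hi) hu hang

/-- Otherwise `τ` would continue `σ` straight beyond its last vertex. -/
lemma length_sub_le (hσ : IsMaximalStraight ε G σ) (hnd : σ.Nodup) (hreg : EpsRegular ε G)
    (hε : ε < π / 6) (hτ : IsStraightPath ε G τ) (hi : i + 1 < σ.length)
    (h₀ : nth σ i = nth τ j) (h₁ : nth σ (i + 1) = nth τ (j + 1)) :
    τ.length - j ≤ σ.length - i := by
  by_contra! hlt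
  set M := σ.length - 1 - i
  have eM := hσ.1.nth_add_eq hreg hε hτ h₀ h₁ (m := M) (by omega) (by omega)
  have eM' := hσ.1.nth_add_eq hreg hε hτ h₀ h₁ (m := M - 1) (by omega) (by omega)
  have hr₀ : nth σ.reverse 0 = nth τ (j + M) := by
    rw [nth_reverse (by omega), ← eM]; congr 1; omega
  have hr₁ : nth σ.reverse 1 = nth τ (j + M - 1) := by
    rw [nth_reverse (by omega), show j + M - 1 = j + (M - 1) by omega, ← eM']; congr 1; omega
  have hedge := hτ.edge_mem (i := j + M) (by omega)
  have hang := hτ.2.2.2.1 (j + M - 1) (by omega)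
  rw [pathAngle, show j + M - 1 + 1 = j + M by omega,
    show j + M - 1 + 2 = j + M + 1 by omega] at hang
  rw [Sym2.eq_swap] at hedge
  refine hσ.reverse.not_cons (List.nodup_reverse.2 hnd) (by linarith [Real.pi_pos])
    (u := nth τ (j + M + 1)) ?_ ?_
  · rwa [hr₀]
  · rw [hr₀, hr₁]; exact cwAngle_comm_mem_Icc hang

lemma infix_of_nth_eq (hσ : IsMaximalStraight ε G σ) (hnd : σ.Nodup) (hreg : EpsRegular ε G)
    (hε : ε < π / 6) (hτ : IsStraightPath ε G τ) (hi : i + 1 < σ.length)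
    (hj : j + 1 < τ.length) (h₀ : nth σ i = nth τ j) (h₁ : nth σ (i + 1) = nth τ (j + 1)) :
    τ <:+: σ := by
  have hfwd := hσ.length_sub_le hnd hreg hε hτ hi h₀ h₁
  have r₀ : nth σ.reverse (σ.length - 2 - i) = nth τ.reverse (τ.length - 2 - j) := by
    rw [nth_reverse (by omega), nth_reverse (by omega)]
    convert h₁ using 2 <;> omega
  have r₁ : nth σ.reverse (σ.length - 2 - i + 1) = nth τ.reverse (τ.length - 2 - j + 1) := by
    rw [nth_reverse (by omega), nth_reverse (by omega)]
    convert h₀ using 2 <;> omega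
  have hbwd := hσ.reverse.length_sub_le (List.nodup_reverse.2 hnd) hreg hε hτ.reverse
    (by simp; omega) r₀ r₁
  simp only [List.length_reverse] at hbwd
  have hagree : ∀ m, m < τ.length → nth τ m = nth σ (i - j + m) := by
    intro m hm
    rcases le_or_gt j m with hjm | hmj
    · have := hσ.1.nth_add_eq hreg hε hτ h₀ h₁ (m := m - j) (by omega) (by omega)
      convert this.symm using 2 <;> omega
    · have := hσ.1.reverse.nth_add_eq hreg hε hτ.reverse r₀ r₁ (m := j + 1 - m)
        (by simp; omega) (by simp; omega)
      rw [nth_reverse (by omega), nth_reverse (by omega)] at this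
      convert this.symm using 2 <;> omega
  have hτeq : τ = (σ.drop (i - j)).take τ.length := by
    refine List.ext_getElem (by simp; omega) fun m hm _ => ?_
    rw [List.getElem_take, List.getElem_drop, ← nth_eq_getElem, ← nth_eq_getElem, hagree m hm]
  rw [hτeq]
  exact (List.take_prefix _ _).isInfix.trans (List.drop_suffix _ _).isInfix

end IsMaximalStraight

lemma not_rel_of_mk_ne {k : Fin 2}
    (h : (Quotient.mk revSetoid σ, k) ≠ (Quotient.mk revSetoid τ, k)) :
    ¬(σ = τ ∨ σ = τ.reverse) :=
  fun hr => h (Prod.ext (Quotient.sound hr) rfl)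

lemma mem_strataSet_cases {t : Stratum × Fin 2} (ht : t ∈ strataSet ε G) {y : Pt}
    (hy : y ∈ Stratum.verts t.1) :
    (∃ γ, IsMaximalStraight ε G γ ∧ t = (Quotient.mk revSetoid γ, 0) ∧ y ∈ γ) ∨
      t.1 = Quotient.mk revSetoid [y] ∧
        (deg G y = 0 ∨ (deg G y = 1 ∨ V2pi ε G y) ∧ t.2 = 0) := by
  rcases ht with (⟨γ, hγ, rfl⟩ | ⟨z, -, hz, rfl | rfl⟩) | ⟨z, -, hz, rfl⟩
  · exact Or.inl ⟨γ, hγ, rfl, hy⟩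
  all_goals obtain rfl : y = z := List.mem_singleton.1 hy
  · exact Or.inr ⟨rfl, Or.inl hz⟩
  · exact Or.inr ⟨rfl, Or.inl hz⟩
  · exact Or.inr ⟨rfl, Or.inr ⟨hz, rfl⟩⟩

lemma exists_eq_mk_of_mem_of_mem {t : Stratum × Fin 2} (ht : t ∈ strataSet ε G) {a b : Pt}
    (hab : a ≠ b) (ha : a ∈ Stratum.verts t.1) (hb : b ∈ Stratum.verts t.1) :
    ∃ γ, IsMaximalStraight ε G γ ∧ t = (Quotient.mk revSetoid γ, 0) ∧ a ∈ γ ∧ b ∈ γ := by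
  rcases mem_strataSet_cases ht ha with ⟨γ, hγ, rfl, haγ⟩ | ⟨h, -⟩
  · exact ⟨γ, hγ, rfl, haγ, hb⟩
  · rw [h] at hb
    exact (hab (List.mem_singleton.1 hb).symm).elim

structure SmallAngleExcess (ε : ℝ) (G : BondGraph) : Prop where
  nonneg : 0 ≤ ε
  lt_pi_div_six : ε < π / 6
  regular : EpsRegular ε G
  thetaEx_lt : ∀ γ : List Pt, IsStraightPath ε G γ → thetaEx γ < π / 6 - ε

namespace SmallAngleExcess

variable (hG : SmallAngleExcess ε G)
include hG

lemma thetaEx_lt_pi_div_two (hγ : IsStraightPath ε G γ) : thetaEx γ < π / 2 := by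
  linarith [hG.thetaEx_lt γ hγ, hG.nonneg, Real.pi_pos]

lemma nodup (hγ : IsStraightPath ε G γ) : γ.Nodup :=
  hγ.nodup (hG.thetaEx_lt_pi_div_two hγ)

/-- Both edges leaving `a` lie within the angle excess of the chord from `a` to `b`, so they make
an angle `< π/3 - 2ε`, while distinct edges at `a` make an angle `≥ π/2 - ε`. -/
lemma nth_succ_eq (hσ : IsStraightPath ε G σ) (hτ : IsStraightPath ε G τ) {i' j' : ℕ}
    (hi : i < i') (hi' : i' < σ.length) (hj : j < j') (hj' : j' < τ.length)
    (ha : nth σ i = nth τ j) (hb : nth σ i' = nth τ j') : nth σ (i + 1) = nth τ (j + 1) := by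
  by_contra hne
  have hσe := hσ.edge_mem (i := i) (by omega)
  have hτe := hτ.edge_mem (i := j) (by omega)
  rw [Sym2.eq_swap] at hσe hτe
  rw [← ha] at hτe
  have hlow := hG.regular.le_norm_argDiff hσe hτe hne
  have hcσ := hσ.chord (hG.thetaEx_lt_pi_div_two hσ) hi hi' (m := i) (by omega)
  have hcτ := hτ.chord (hG.thetaEx_lt_pi_div_two hτ) hj hj' (m := j) (by omega)
  rw [← ha, ← hb] at hcτ
  have hsplit : argDiff (vec (nth σ i) (nth σ (i + 1))) (vec (nth σ i) (nth τ (j + 1))) =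
      argDiff (edgeVec σ i) (vec (nth σ i) (nth σ i')) +
        argDiff (vec (nth σ i) (nth σ i')) (edgeVec τ j) := by
    rw [argDiff_add_argDiff, edgeVec, edgeVec, ha]
  rw [hsplit] at hlow
  rw [norm_argDiff_comm] at hcσ
  linarith [norm_add_le (argDiff (edgeVec σ i) (vec (nth σ i) (nth σ i')))
    (argDiff (vec (nth σ i) (nth σ i')) (edgeVec τ j)), hcσ.2, hcτ.2,
    hG.thetaEx_lt σ hσ, hG.thetaEx_lt τ hτ, hG.nonneg, Real.pi_pos]

lemma infix_of_nth_eq_of_lt (hσ : IsMaximalStraight ε G σ) (hτ : IsStraightPath ε G τ)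
    {i' j' : ℕ}
    (hi : i < i') (hi' : i' < σ.length) (hj : j < j') (hj' : j' < τ.length)
    (ha : nth σ i = nth τ j) (hb : nth σ i' = nth τ j') : τ <:+: σ :=
  hσ.infix_of_nth_eq (hG.nodup hσ.1) hG.regular hG.lt_pi_div_six hτ (by omega) (by omega) ha
    (hG.nth_succ_eq hσ.1 hτ hi hi' hj hj' ha hb)

/-- By `nth_succ_eq` the two paths share an oriented edge, so each is part of the other. -/
lemma eq_or_eq_reverse (hσ : IsMaximalStraight ε G σ) (hτ : IsMaximalStraight ε G τ)
    {a b : Pt} (hab : a ≠ b) (haσ : a ∈ σ) (hbσ : b ∈ σ) (haτ : a ∈ τ) (hbτ : b ∈ τ) :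
    σ = τ ∨ σ = τ.reverse := by
  obtain ⟨i, hi, hia⟩ := exists_nth_eq_of_mem haσ
  obtain ⟨i', hi', hib⟩ := exists_nth_eq_of_mem hbσ
  wlog hii' : i < i' generalizing a b i i'
  · exact this hab.symm hbσ haσ hbτ haτ i' hi' hib i hi hia
      (lt_of_le_of_ne (not_lt.1 hii') fun h => hab (by rw [← hia, ← hib, h]))
  obtain ⟨j, hj, hja⟩ := exists_nth_eq_of_mem haτ
  obtain ⟨j', hj', hjb⟩ := exists_nth_eq_of_mem hbτ
  refine hτ.2 σ hσ.1 ?_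
  rcases lt_or_gt_of_ne (fun h : j = j' => hab (by rw [← hja, ← hjb, h])) with hjj' | hjj'
  · exact Or.inl (hG.infix_of_nth_eq_of_lt hσ hτ.1 hii' hi' hjj' hj' (hia.trans hja.symm)
      (hib.trans hjb.symm))
  · refine Or.inr (List.reverse_infix.1 ?_)
    rw [List.reverse_reverse]
    refine hG.infix_of_nth_eq_of_lt hσ hτ.1.reverse (j := τ.length - 1 - j)
      (j' := τ.length - 1 - j') hii' hi' (by omega) (by simp; omega) ?_ ?_
    · rw [nth_reverse (by omega), hia, ← hja]; congr 1; omega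
    · rw [nth_reverse (by omega), hib, ← hjb]; congr 1; omega

lemma eq_of_mem_of_mem (hσ : IsMaximalStraight ε G σ) (hτ : IsMaximalStraight ε G τ)
    (hne : ¬(σ = τ ∨ σ = τ.reverse)) {a b : Pt} (haσ : a ∈ σ) (haτ : a ∈ τ) (hbσ : b ∈ σ)
    (hbτ : b ∈ τ) : a = b :=
  by_contra fun hab => hne (hG.eq_or_eq_reverse hσ hτ hab haσ hbσ haτ hbτ)

/-- A straight crossing would make `τ` continue `σ`. -/
lemma isNearRightAngle (hσ : IsMaximalStraight ε G σ) (hτ : IsMaximalStraight ε G τ)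
    (hne : ¬(σ = τ ∨ σ = τ.reverse)) {p a u : Pt} (ha : s(p, a) ∈ pathEdges σ)
    (hu : s(p, u) ∈ pathEdges τ) : IsNearRightAngle ε (argDiff (vec p u) (vec p a)) := by
  obtain ⟨hpσ, haσ⟩ := mem_of_mem_pathEdges ha
  obtain ⟨hpτ, huτ⟩ := mem_of_mem_pathEdges hu
  have haE : s(a, p) ∈ G.E := by rw [Sym2.eq_swap]; exact hσ.1.mem_E_of_mem_pathEdges ha
  have huE : s(u, p) ∈ G.E := by rw [Sym2.eq_swap]; exact hτ.1.mem_E_of_mem_pathEdges hu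
  have hua : u ≠ a := fun h => G.ne_of_mem_E haE
    (hG.eq_of_mem_of_mem hσ hτ hne haσ (h ▸ huτ) hpσ hpτ)
  have hgood := hG.regular.2 u p a huE haE hua
  rcases isNearRightAngle_or_of_mem_goodAngles hgood with h | h
  · rwa [coe_cwAngle_sub_sub (G.ne_of_mem_E huE) (G.ne_of_mem_E haE)] at h
  · have huσ := hσ.mem_of_cwAngle_mem_Icc (hG.nodup hσ.1) hG.regular hG.lt_pi_div_six ha huE
      (cwAngle_mem_Icc_iff.2 h)
    exact (G.ne_of_mem_E huE (hG.eq_of_mem_of_mem hσ hτ hne huσ huτ hpσ hpτ)).elim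

/-- The three pairwise angles of the edges at `p` cannot all be nearly right. -/
lemma not_three_mem (hσ : IsMaximalStraight ε G σ) (hτ : IsMaximalStraight ε G τ)
    {ρ : List Pt} (hρ : IsMaximalStraight ε G ρ) (hστ : ¬(σ = τ ∨ σ = τ.reverse))
    (hσρ : ¬(σ = ρ ∨ σ = ρ.reverse)) (hτρ : ¬(τ = ρ ∨ τ = ρ.reverse)) {p : Pt} (hpσ : p ∈ σ)
    (hpτ : p ∈ τ) (hpρ : p ∈ ρ) : False := by
  obtain ⟨a, ha⟩ := hσ.1.exists_mem_pathEdges hpσ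
  obtain ⟨u, hu⟩ := hτ.1.exists_mem_pathEdges hpτ
  obtain ⟨v, hv⟩ := hρ.1.exists_mem_pathEdges hpρ
  have hsum := hG.isNearRightAngle hσ hρ hσρ ha hv
  rw [← argDiff_add_argDiff _ (vec p u)] at hsum
  exact (hG.isNearRightAngle hτ hρ hτρ hu hv).not_add hG.lt_pi_div_six
    (hG.isNearRightAngle hσ hτ hστ ha hu) hsum

/-- `γ₁` and `γ₂` leave `γ` at nearly right angles, hence nearly parallel or antiparallel to
each other: see `false_of_same_side` and `false_of_opposite_sides`. -/
lemma not_triangle {γ₁ γ₂ : List Pt} (hγ : IsMaximalStraight ε G γ)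
    (hγ₁ : IsMaximalStraight ε G γ₁) (hγ₂ : IsMaximalStraight ε G γ₂)
    (h₁ : ¬(γ = γ₁ ∨ γ = γ₁.reverse)) (h₂ : ¬(γ = γ₂ ∨ γ = γ₂.reverse))
    (h₁₂ : ¬(γ₁ = γ₂ ∨ γ₁ = γ₂.reverse)) {p₁ p₂ x : Pt} (hp : p₁ ≠ p₂) (hxp₁ : x ≠ p₁)
    (hxp₂ : x ≠ p₂) (hp₁ : p₁ ∈ γ) (hp₂ : p₂ ∈ γ) (hp₁' : p₁ ∈ γ₁) (hp₂' : p₂ ∈ γ₂)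
    (hx₁ : x ∈ γ₁) (hx₂ : x ∈ γ₂) : False := by
  obtain ⟨a₁, a₂, ha₁, ha₂, hv, hf⟩ :=
    hγ.1.exists_chord_bounds (hG.thetaEx_lt_pi_div_two hγ.1) hp₁ hp₂ hp
  obtain ⟨u₁, m₁, hu₁, hm₁, hw₁, hk₁⟩ :=
    hγ₁.1.exists_chord_bounds (hG.thetaEx_lt_pi_div_two hγ₁.1) hp₁' hx₁ hxp₁.symm
  obtain ⟨u₂, m₂, hu₂, hm₂, hw₂, hk₂⟩ :=
    hγ₂.1.exists_chord_bounds (hG.thetaEx_lt_pi_div_two hγ₂.1) hp₂' hx₂ hxp₂.symm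
  have hθ := hG.thetaEx_lt γ hγ.1
  have hθ₁ := hG.thetaEx_lt γ₁ hγ₁.1
  have hθ₂ := hG.thetaEx_lt γ₂ hγ₂.1
  have hm₁E : s(m₁, x) ∈ G.E := by rw [Sym2.eq_swap]; exact hγ₁.1.mem_E_of_mem_pathEdges hm₁
  have hm₂E : s(m₂, x) ∈ G.E := by rw [Sym2.eq_swap]; exact hγ₂.1.mem_E_of_mem_pathEdges hm₂
  have hm : m₁ ≠ m₂ := fun h => G.ne_of_mem_E hm₁E <| hG.eq_of_mem_of_mem hγ₁ hγ₂ h₁₂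
    (mem_of_mem_pathEdges hm₁).2 (h ▸ (mem_of_mem_pathEdges hm₂).2) hx₁ hx₂
  have hx := hG.regular.le_norm_argDiff hm₁E hm₂E hm
  have he₂ : vec a₂ p₂ ≠ 0 :=
    vec_ne_zero (G.ne_of_mem_E (hγ.1.mem_E_of_mem_pathEdges ha₂)).symm
  have hperp₂ := hG.isNearRightAngle hγ hγ₂ h₂ ha₂ hu₂
  rw [← neg_vec a₂ p₂] at hperp₂
  rcases (hG.isNearRightAngle hγ hγ₁ h₁ ha₁ hu₁).norm_argDiff_le_or he₂ hperp₂ with hg | hg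
  · rw [← neg_vec m₁ x, ← neg_vec m₂ x] at hx
    exact false_of_same_side (vec_ne_zero (G.ne_of_mem_E hm₁E))
      (vec_ne_zero (G.ne_of_mem_E hm₂E)) (hk₁.trans_lt hθ₁) (hk₂.trans_lt hθ₂) (by linarith) hx
  · refine false_of_opposite_sides hG.nonneg
      (vec_ne_zero (G.ne_of_mem_E (hγ₁.1.mem_E_of_mem_pathEdges hu₁)))
      (vec_ne_zero hxp₁.symm) (vec_ne_zero hxp₂.symm) (hG.isNearRightAngle hγ hγ₁ h₁ ha₁ hu₁)
      ?_ (hw₁.trans_lt hθ₁) (hw₂.trans_lt hθ₂) (by linarith)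
    rw [sub_eq_add_neg, neg_vec, vec_add_vec]
    exact hv.trans_lt hθ

lemma eq_of_mem_of_mem_strataSet {t t' : Stratum × Fin 2} (ht : t ∈ strataSet ε G)
    (ht' : t' ∈ strataSet ε G) {a b : Pt} (hab : a ≠ b) (ha : a ∈ Stratum.verts t.1)
    (hb : b ∈ Stratum.verts t.1) (ha' : a ∈ Stratum.verts t'.1)
    (hb' : b ∈ Stratum.verts t'.1) : t = t' := by
  obtain ⟨γ, hγ, rfl, haγ, hbγ⟩ := exists_eq_mk_of_mem_of_mem ht hab ha hb
  obtain ⟨γ', hγ', rfl, haγ', hbγ'⟩ := exists_eq_mk_of_mem_of_mem ht' hab ha' hb'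
  exact Prod.ext (Quotient.sound (hG.eq_or_eq_reverse hγ hγ' hab haγ hbγ haγ' hbγ')) rfl

/-- Two such paths would share a neighbour of `y`, or one would continue the other straight. -/
lemma not_deg_eq_one_or_v2pi (hσ : IsMaximalStraight ε G σ) (hτ : IsMaximalStraight ε G τ)
    (hne : ¬(σ = τ ∨ σ = τ.reverse)) {y : Pt} (hyσ : y ∈ σ) (hyτ : y ∈ τ) :
    ¬(deg G y = 1 ∨ V2pi ε G y) := by
  obtain ⟨b, hb⟩ := hσ.1.exists_mem_pathEdges hyσ
  obtain ⟨c, hc⟩ := hτ.1.exists_mem_pathEdges hyτ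
  have hbN : b ∈ nbhd G y := hσ.1.mem_E_of_mem_pathEdges hb
  have hcN : c ∈ nbhd G y := hτ.1.mem_E_of_mem_pathEdges hc
  have hcy : y ≠ c := G.ne_of_mem_E hcN
  have hbc : b ≠ c := fun h => hcy <| hG.eq_of_mem_of_mem hσ hτ hne hyσ hyτ
    (h ▸ (mem_of_mem_pathEdges hb).2) (mem_of_mem_pathEdges hc).2
  rintro (h₁ | ⟨-, x₁, x₂, hx, hnb, hang⟩)
  · obtain ⟨a, ha⟩ := Set.ncard_eq_one.1 h₁
    rw [ha] at hbN hcN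
    exact hbc (hbN.trans hcN.symm)
  · have hcb : cwAngle (c - y) (b - y) ∈ Set.Icc (π - ε) (π + ε) := by
      rw [hnb] at hbN hcN
      simp only [Set.mem_insert_iff, Set.mem_singleton_iff] at hbN hcN
      rcases hbN with rfl | rfl <;> rcases hcN with rfl | rfl
      · exact (hbc rfl).elim
      · exact cwAngle_comm_mem_Icc hang
      · exact hang
      · exact (hbc rfl).elim
    have hcσ := hσ.mem_of_cwAngle_mem_Icc (hG.nodup hσ.1) hG.regular hG.lt_pi_div_six hb
      (by rw [Sym2.eq_swap]; exact hcN) hcb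
    exact hcy (hG.eq_of_mem_of_mem hσ hτ hne hyσ hyτ hcσ (mem_of_mem_pathEdges hc).2)

lemma not_three_strata {t₁ t₂ t₃ : Stratum × Fin 2} (h₁ : t₁ ∈ strataSet ε G)
    (h₂ : t₂ ∈ strataSet ε G) (h₃ : t₃ ∈ strataSet ε G) (h₁₂ : t₁ ≠ t₂) (h₁₃ : t₁ ≠ t₃)
    (h₂₃ : t₂ ≠ t₃) {y : Pt} (hy₁ : y ∈ Stratum.verts t₁.1) (hy₂ : y ∈ Stratum.verts t₂.1)
    (hy₃ : y ∈ Stratum.verts t₃.1) : False := by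
  have tag_ne : ∀ {t t' : Stratum × Fin 2}, t.1 = Quotient.mk revSetoid [y] →
      t'.1 = Quotient.mk revSetoid [y] → t ≠ t' → t.2 ≠ t'.2 :=
    fun e e' hne h => hne (Prod.ext (e.trans e'.symm) h)
  have low : ∀ {γ : List Pt} {k : Fin 2}, IsStraightPath ε G γ → y ∈ γ →
      (deg G y = 0 ∨ (deg G y = 1 ∨ V2pi ε G y) ∧ k = 0) →
      (deg G y = 1 ∨ V2pi ε G y) ∧ k = 0 :=
    fun hγ hy d => d.resolve_left (hγ.deg_ne_zero hy)
  rcases mem_strataSet_cases h₁ hy₁ with ⟨γ₁, hγ₁, rfl, hyγ₁⟩ | ⟨e₁, d₁⟩ <;>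
  rcases mem_strataSet_cases h₂ hy₂ with ⟨γ₂, hγ₂, rfl, hyγ₂⟩ | ⟨e₂, d₂⟩ <;>
  rcases mem_strataSet_cases h₃ hy₃ with ⟨γ₃, hγ₃, rfl, hyγ₃⟩ | ⟨e₃, d₃⟩
  · exact hG.not_three_mem hγ₁ hγ₂ hγ₃ (not_rel_of_mk_ne h₁₂) (not_rel_of_mk_ne h₁₃)
      (not_rel_of_mk_ne h₂₃) hyγ₁ hyγ₂ hyγ₃
  · exact hG.not_deg_eq_one_or_v2pi hγ₁ hγ₂ (not_rel_of_mk_ne h₁₂) hyγ₁ hyγ₂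
      (low hγ₁.1 hyγ₁ d₃).1
  · exact hG.not_deg_eq_one_or_v2pi hγ₁ hγ₃ (not_rel_of_mk_ne h₁₃) hyγ₁ hyγ₃
      (low hγ₁.1 hyγ₁ d₂).1
  · exact tag_ne e₂ e₃ h₂₃ ((low hγ₁.1 hyγ₁ d₂).2.trans (low hγ₁.1 hyγ₁ d₃).2.symm)
  · exact hG.not_deg_eq_one_or_v2pi hγ₂ hγ₃ (not_rel_of_mk_ne h₂₃) hyγ₂ hyγ₃
      (low hγ₂.1 hyγ₂ d₁).1
  · exact tag_ne e₁ e₃ h₁₃ ((low hγ₂.1 hyγ₂ d₁).2.trans (low hγ₂.1 hyγ₂ d₃).2.symm)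
  · exact tag_ne e₁ e₂ h₁₂ ((low hγ₃.1 hyγ₃ d₁).2.trans (low hγ₃.1 hyγ₃ d₂).2.symm)
  · have pigeonhole : ∀ a b c : Fin 2, a ≠ b → a ≠ c → b ≠ c → False := by decide
    exact pigeonhole _ _ _ (tag_ne e₁ e₂ h₁₂) (tag_ne e₁ e₃ h₁₃) (tag_ne e₂ e₃ h₂₃)

end SmallAngleExcess

end Paths

/-- **Lemma (small angle excess, (iii)).** If every straight path has angle excess less than
`π/6 − ε`, then any two distinct orthogonal strata of a stratum are disjoint. -/
theorem orth_strata_disjoint (ε : ℝ) (hε0 : 0 < ε) (hε : ε < π / 6)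
    (G : BondGraph) (hreg : EpsRegular ε G)
    (hex : ∀ γ : List Pt, IsStraightPath ε G γ → thetaEx γ < π / 6 - ε) :
    ∀ s ∈ strataSet ε G, ∀ s₁ ∈ orthStrata ε G s, ∀ s₂ ∈ orthStrata ε G s,
      s₁ ≠ s₂ → Stratum.verts s₁.1 ∩ Stratum.verts s₂.1 = ∅ := by
  have hG : SmallAngleExcess ε G := ⟨hε0.le, hε, hreg, hex⟩
  rintro s hs s₁ ⟨hs₁, hs₁s, p₁, hp₁, hp₁'⟩ s₂ ⟨hs₂, hs₂s, p₂, hp₂, hp₂'⟩ h₁₂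
  refine Set.eq_empty_of_forall_notMem fun x ⟨hx₁, hx₂⟩ => ?_
  by_cases hp : p₁ = p₂
  · subst hp
    by_cases hxp : x = p₁
    · subst hxp
      exact hG.not_three_strata hs hs₁ hs₂ hs₁s.symm hs₂s.symm h₁₂ hp₁ hx₁ hx₂
    · exact h₁₂ (hG.eq_of_mem_of_mem_strataSet hs₁ hs₂ hxp hx₁ hp₁' hx₂ hp₂')
  by_cases hxp₁ : x = p₁
  · subst hxp₁
    exact hs₂s (hG.eq_of_mem_of_mem_strataSet hs hs₂ hp hp₁ hp₂ hx₂ hp₂').symm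
  by_cases hxp₂ : x = p₂
  · subst hxp₂
    exact hs₁s (hG.eq_of_mem_of_mem_strataSet hs hs₁ hp hp₁ hp₂ hp₁' hx₁).symm
  obtain ⟨γ, hγ, rfl, hp₁γ, hp₂γ⟩ := exists_eq_mk_of_mem_of_mem hs hp hp₁ hp₂
  obtain ⟨γ₁, hγ₁, rfl, hp₁γ₁, hxγ₁⟩ := exists_eq_mk_of_mem_of_mem hs₁ (Ne.symm hxp₁) hp₁' hx₁
  obtain ⟨γ₂, hγ₂, rfl, hp₂γ₂, hxγ₂⟩ := exists_eq_mk_of_mem_of_mem hs₂ (Ne.symm hxp₂) hp₂' hx₂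
  exact hG.not_triangle hγ hγ₁ hγ₂ (not_rel_of_mk_ne hs₁s.symm) (not_rel_of_mk_ne hs₂s.symm)
    (not_rel_of_mk_ne h₁₂) hp hxp₁ hxp₂ hp₁γ hp₂γ hp₁γ₁ hp₂γ₂ hxγ₁ hxγ₂
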